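/- With R_∞ = ⋃_{n≥1} (A_n + T_n ℕ) as above, the asymptotic density of R_∞ exists and satisfies 1/κ_1 ≤ d(R_∞) ≤ Σ_{n≥1} 1/κ_n < 1. In particular 0 < d(R_∞) < 1. -/

import Mathlib

/-! Each block `A_n + T_n ℕ` is `T_n`-periodic with `T_{n-1}` elements per period, so it has
density `1/κ_n`; the union `R_M` of the first `M` blocks is `T_M`-periodic, so it has a density
`D_M`, which increases with `M` and, by subadditivity, is at most `Σ 1/κ_n ≤ 1/6`. The tail is
controlled uniformly in `N`: the elements of block `n` are at least `T_n/3 ≥ n`, and a block has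
at most `4N/κ_n` elements below `N`, so the counting functions of `R_∞` and `R_M` differ by at
most `4N Σ_{n>M} 1/κ_n`. Hence `R_∞` has density `sup_M D_M ≥ D_1 = 1/κ_1`. -/

open Filter

/-- `(T, κ)` is a scale: `κ 0 = 3`, each `κ (n+1)` is a multiple of `3 * κ n`,
`T 0` is a positive multiple of `3`, `T (n+1) = κ (n+1) * T n`, and
`κ (n+1) / κ n → ∞`. -/
structure IsScale (T κ : ℕ → ℕ) : Prop where
  kappa_zero : κ 0 = 3
  kappa_dvd : ∀ n, 3 * κ n ∣ κ (n + 1)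
  T_zero_dvd : 3 ∣ T 0
  T_zero_pos : 0 < T 0
  T_succ : ∀ n, T (n + 1) = κ (n + 1) * T n
  ratio_tendsto : Filter.Tendsto (fun n => (κ (n + 1) : ℝ) / κ n) Filter.atTop Filter.atTop

/-- `A` has asymptotic density `d`. -/
def HasDensity (A : Set ℕ) (d : ℝ) : Prop :=
  Filter.Tendsto (fun N => (Nat.card ↥(A ∩ Set.Iio N) : ℝ) / N) Filter.atTop (nhds d)

/-- The set `A_n + T_n ℕ` where `A_n = [T_n/3, T_n/3 + T_{n-1} - 1] ∩ ℕ`. -/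
def progBlock (T : ℕ → ℕ) (n : ℕ) : Set ℕ :=
  {m | ∃ a ∈ Set.Ico (T n / 3) (T n / 3 + T (n - 1)), ∃ k, m = a + T n * k}

/-- The tail `R_∞ = ⋃_{n ≥ 1} (A_n + T_n ℕ)`. -/
def Rinfty (T : ℕ → ℕ) : Set ℕ := ⋃ n : ℕ, progBlock T (n + 1)

open Filter Topology Set

noncomputable def countBelow (A : Set ℕ) (N : ℕ) : ℕ := Nat.card ↥(A ∩ Iio N)

section Counting

variable {A B : Set ℕ} {p N : ℕ}

lemma countBelow_eq_ncard (A : Set ℕ) (N : ℕ) : countBelow A N = (A ∩ Iio N).ncard :=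
  Nat.card_coe_set_eq _

lemma countBelow_eq_count (A : Set ℕ) [DecidablePred (· ∈ A)] (N : ℕ) :
    countBelow A N = Nat.count (· ∈ A) N := by
  rw [countBelow_eq_ncard, Nat.count_eq_card_filter_range, ← Set.ncard_coe_finset]
  congr 1
  ext m
  simp [and_comm]

lemma countBelow_mono (A : Set ℕ) : Monotone (countBelow A) := fun _ _ hNM =>
  Set.ncard_le_ncard (inter_subset_inter_right A (Iio_subset_Iio hNM))
    ((finite_Iio _).inter_of_right A)

lemma countBelow_le_of_forall_lt (h : ∀ m < N, m ∈ A → m ∈ B) :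
    countBelow A N ≤ countBelow B N := by
  simp only [countBelow_eq_ncard]
  exact Set.ncard_le_ncard (fun m ⟨hmA, hm⟩ => ⟨h m hm hmA, hm⟩)
    ((finite_Iio _).inter_of_right B)

lemma countBelow_mono_left (h : A ⊆ B) (N : ℕ) : countBelow A N ≤ countBelow B N :=
  countBelow_le_of_forall_lt fun _ _ hm => h hm

lemma countBelow_eq_zero_of_forall_le (h : ∀ m ∈ A, N ≤ m) : countBelow A N = 0 := by
  rw [countBelow_eq_ncard, Set.ncard_eq_zero ((finite_Iio _).inter_of_right A)]
  exact eq_empty_of_forall_notMem fun m ⟨hmA, hm⟩ => (h m hmA).not_gt hm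

lemma countBelow_union_le (A B : Set ℕ) (N : ℕ) :
    countBelow (A ∪ B) N ≤ countBelow A N + countBelow B N := by
  simp only [countBelow_eq_ncard, union_inter_distrib_right]
  exact Set.ncard_union_le _ _

lemma countBelow_biUnion_le {ι : Type*} (s : Finset ι) (A : ι → Set ℕ) (N : ℕ) :
    countBelow (⋃ i ∈ s, A i) N ≤ ∑ i ∈ s, countBelow (A i) N := by
  simp only [countBelow_eq_ncard, iUnion₂_inter]
  exact s.set_ncard_biUnion_le _

lemma countBelow_add_of_periodic (hA : Function.Periodic (· ∈ A) p) (N : ℕ) :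
    countBelow A (p + N) = countBelow A p + countBelow A N := by
  classical
  simp only [countBelow_eq_count, Nat.count_add]
  congr 2
  ext m
  rw [add_comm]
  exact iff_of_eq (hA m)

lemma countBelow_mul_add_of_periodic (hA : Function.Periodic (· ∈ A) p) (k N : ℕ) :
    countBelow A (k * p + N) = k * countBelow A p + countBelow A N := by
  induction k with
  | zero => simp
  | succ k ih =>
    rw [add_mul, one_mul, add_comm (k * p), add_assoc, countBelow_add_of_periodic hA, ih]
    ring

lemma abs_countBelow_sub_le_of_periodic (hA : Function.Periodic (· ∈ A) p) (hp : 0 < p)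
    (N : ℕ) :
    |(countBelow A N : ℝ) - countBelow A p / p * N| ≤ countBelow A p := by
  obtain ⟨q, r, hr, rfl⟩ : ∃ q r, r < p ∧ N = q * p + r :=
    ⟨N / p, N % p, Nat.mod_lt N hp, (Nat.div_add_mod' N p).symm⟩
  have hp' : (p : ℝ) ≠ 0 := by positivity
  have hsplit : (countBelow A (q * p + r) : ℝ) - countBelow A p / p * (q * p + r : ℕ)
      = countBelow A r - countBelow A p / p * r := by
    rw [countBelow_mul_add_of_periodic hA]
    push_cast
    field_simp
    ring
  rw [hsplit]
  refine abs_sub_le_of_nonneg_of_le (by positivity)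
    (by exact_mod_cast countBelow_mono A hr.le) (by positivity) ?_
  rw [div_mul_eq_mul_div, div_le_iff₀ (by positivity)]
  gcongr

end Counting

lemma tendsto_div_of_abs_sub_le {f : ℕ → ℝ} {a C : ℝ} (h : ∀ N, |f N - a * N| ≤ C) :
    Tendsto (fun N => f N / N) atTop (𝓝 a) := by
  have herr : Tendsto (fun N : ℕ => (f N - a * N) / N) atTop (𝓝 0) := by
    refine squeeze_zero_norm (fun N => ?_) (tendsto_const_div_atTop_nhds_zero_nat C)
    rw [norm_div, Real.norm_natCast]
    exact div_le_div_of_nonneg_right (h N) N.cast_nonneg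
  refine (herr.const_add a).congr' ?_ |>.trans (by rw [add_zero])
  filter_upwards [eventually_ne_atTop 0] with N hN
  field_simp
  ring

lemma hasDensity_of_periodic {A : Set ℕ} {p : ℕ} (hA : Function.Periodic (· ∈ A) p)
    (hp : 0 < p) :
    HasDensity A (countBelow A p / p) :=
  tendsto_div_of_abs_sub_le (abs_countBelow_sub_le_of_periodic hA hp)

lemma periodic_mem_biUnion {ι α : Type*} [Add α] {s : Finset ι} {A : ι → Set α}
    {c : α} (h : ∀ i ∈ s, Function.Periodic (· ∈ A i) c) :
    Function.Periodic (· ∈ ⋃ i ∈ s, A i) c := by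
  intro m
  simp only [mem_iUnion₂]
  exact propext (exists₂_congr fun i hi => iff_of_eq (h i hi m))

namespace HasDensity

variable {A B : Set ℕ} {a b : ℝ}

lemma le_of_subset (hA : HasDensity A a) (hB : HasDensity B b) (h : A ⊆ B) : a ≤ b :=
  le_of_tendsto_of_tendsto' hA hB fun N =>
    div_le_div_of_nonneg_right (by exact_mod_cast countBelow_mono_left h N) N.cast_nonneg

lemma biUnion_le_sum {ι : Type*} {s : Finset ι} {A : ι → Set ℕ} {a : ι → ℝ}
    (hA : ∀ i ∈ s, HasDensity (A i) (a i)) (hU : HasDensity (⋃ i ∈ s, A i) b) :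
    b ≤ ∑ i ∈ s, a i :=
  le_of_tendsto_of_tendsto' hU (tendsto_finsetSum s hA) fun N => by
    rw [← Finset.sum_div]
    gcongr
    exact_mod_cast countBelow_biUnion_le s A N

lemma of_approx_from_below {B : ℕ → Set ℕ} {D e : ℕ → ℝ} {d : ℝ}
    (hB : ∀ M, HasDensity (B M) (D M)) (hD : Tendsto D atTop (𝓝 d))
    (he : Tendsto e atTop (𝓝 0)) (hBA : ∀ M, B M ⊆ A)
    (hAB : ∀ M N, (countBelow A N : ℝ) ≤ countBelow (B M) N + e M * N) : HasDensity A d := by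
  refine tendsto_order.2 ⟨fun a ha => ?_, fun b hb => ?_⟩
  · obtain ⟨M, hM⟩ := (hD.eventually (lt_mem_nhds ha)).exists
    filter_upwards [(hB M).eventually (lt_mem_nhds hM)] with N hN
    exact hN.trans_le <|
      div_le_div_of_nonneg_right (by exact_mod_cast countBelow_mono_left (hBA M) N) N.cast_nonneg
  · obtain ⟨M, hM⟩ := ((hD.add he).eventually (gt_mem_nhds (by rwa [add_zero]))).exists
    filter_upwards [(hB M).eventually (gt_mem_nhds (lt_sub_iff_add_lt.2 hM)),
      eventually_ne_atTop 0] with N hN hN0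
    calc (countBelow A N : ℝ) / N ≤ (countBelow (B M) N + e M * N) / N :=
          div_le_div_of_nonneg_right (hAB M N) N.cast_nonneg
      _ = countBelow (B M) N / N + e M := by field_simp
      _ < b := lt_sub_iff_add_lt.1 hN

end HasDensity

def residueWindow (p s ℓ : ℕ) : Set ℕ := {m | m % p ∈ Ico s (s + ℓ)}

section ResidueWindow

variable {p s ℓ : ℕ}

lemma residueWindow_eq (h : s + ℓ ≤ p) :
    residueWindow p s ℓ = {m | ∃ a ∈ Ico s (s + ℓ), ∃ k, m = a + p * k} := by
  ext m
  constructor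
  · exact fun hm => ⟨m % p, hm, m / p, (Nat.mod_add_div m p).symm⟩
  · rintro ⟨a, ha, k, rfl⟩
    rwa [residueWindow, mem_ofPred_eq, Nat.add_mul_mod_self_left,
      Nat.mod_eq_of_lt (ha.2.trans_le h)]

lemma periodic_residueWindow_of_dvd {q : ℕ} (hpq : p ∣ q) :
    Function.Periodic (· ∈ residueWindow p s ℓ) q := by
  obtain ⟨k, rfl⟩ := hpq
  intro m
  simp only [residueWindow, mem_ofPred_eq, Nat.add_mul_mod_self_left]

lemma periodic_residueWindow (p s ℓ : ℕ) : Function.Periodic (· ∈ residueWindow p s ℓ) p :=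
  periodic_residueWindow_of_dvd dvd_rfl

lemma countBelow_residueWindow_period (h : s + ℓ ≤ p) :
    countBelow (residueWindow p s ℓ) p = ℓ := by
  have : residueWindow p s ℓ ∩ Iio p = Ico s (s + ℓ) := by
    ext m
    simp only [residueWindow, mem_inter_iff, mem_ofPred_eq, mem_Iio, mem_Ico]
    constructor
    · rintro ⟨hm, hmp⟩
      rwa [Nat.mod_eq_of_lt hmp] at hm
    · rintro hm
      have hmp : m < p := by omega
      rw [Nat.mod_eq_of_lt hmp]
      exact ⟨hm, hmp⟩
  rw [countBelow_eq_ncard, this, Set.ncard_Ico_nat]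
  omega

lemma hasDensity_residueWindow (h : s + ℓ ≤ p) (hp : 0 < p) :
    HasDensity (residueWindow p s ℓ) (ℓ / p) := by
  simpa only [countBelow_residueWindow_period h] using
    hasDensity_of_periodic (periodic_residueWindow p s ℓ) hp

lemma countBelow_residueWindow_le (h : s + ℓ ≤ p) (hp : 0 < p) (N : ℕ) :
    (countBelow (residueWindow p s ℓ) N : ℝ) ≤ ℓ / p * N + ℓ := by
  have := abs_countBelow_sub_le_of_periodic (periodic_residueWindow p s ℓ) hp N
  rw [countBelow_residueWindow_period h] at this
  linarith [le_abs_self ((countBelow (residueWindow p s ℓ) N : ℝ) - ℓ / p * N)]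

end ResidueWindow

def blockUnion (T : ℕ → ℕ) (M : ℕ) : Set ℕ :=
  ⋃ n ∈ Finset.range M, progBlock T (n + 1)

lemma blockUnion_mono (T : ℕ → ℕ) : Monotone (blockUnion T) := fun _ _ hMM' =>
  biUnion_subset_biUnion_left (by simpa using hMM')

lemma blockUnion_subset_Rinfty (T : ℕ → ℕ) (M : ℕ) : blockUnion T M ⊆ Rinfty T :=
  iUnion₂_subset fun n _ => subset_iUnion (fun n => progBlock T (n + 1)) n

lemma div_three_le_of_mem_progBlock {T : ℕ → ℕ} {n m : ℕ} (hm : m ∈ progBlock T n) :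
    T n / 3 ≤ m := by
  obtain ⟨a, ha, k, rfl⟩ := hm
  exact ha.1.trans (Nat.le_add_right a _)

namespace IsScale

variable {T κ : ℕ → ℕ}

lemma kappa_dvd_of_le (h : IsScale T κ) {j n : ℕ} (hjn : j ≤ n) : κ j ∣ κ n := by
  induction n, hjn using Nat.le_induction with
  | base => exact dvd_rfl
  | succ n _ ih => exact ih.trans (dvd_of_mul_left_dvd (h.kappa_dvd n))

-- The divisibility chain alone would allow `κ` to vanish from some index on; the growth of
-- the ratios `κ (n + 1) / κ n` rules this out.
lemma kappa_pos (h : IsScale T κ) (n : ℕ) : 0 < κ n := by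
  obtain ⟨b, hb⟩ := (h.ratio_tendsto.eventually_ge_atTop 1).exists_forall_of_atTop
  have hratio := hb (max b n) (le_max_left b n)
  have hκ : κ (max b n + 1) ≠ 0 := by
    rintro h0
    rw [h0, Nat.cast_zero, zero_div] at hratio
    exact absurd hratio (by norm_num)
  exact Nat.pos_of_ne_zero fun h0 =>
    hκ (Nat.eq_zero_of_zero_dvd (h0 ▸ h.kappa_dvd_of_le (by omega)))

lemma three_pow_le_kappa (h : IsScale T κ) (n : ℕ) : 3 ^ (n + 1) ≤ κ n := by
  induction n with
  | zero => simp [h.kappa_zero]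
  | succ n ih =>
    calc 3 ^ (n + 2) = 3 * 3 ^ (n + 1) := by ring
      _ ≤ 3 * κ n := by omega
      _ ≤ κ (n + 1) := Nat.le_of_dvd (h.kappa_pos _) (h.kappa_dvd n)

lemma three_dvd_kappa_succ (h : IsScale T κ) (n : ℕ) : 3 ∣ κ (n + 1) :=
  dvd_of_mul_right_dvd (h.kappa_dvd n)

lemma T_pos (h : IsScale T κ) (n : ℕ) : 0 < T n := by
  induction n with
  | zero => exact h.T_zero_pos
  | succ n ih => rw [h.T_succ]; exact Nat.mul_pos (h.kappa_pos _) ih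

lemma T_dvd_of_le (h : IsScale T κ) {j n : ℕ} (hjn : j ≤ n) : T j ∣ T n := by
  induction n, hjn using Nat.le_induction with
  | base => exact dvd_rfl
  | succ n _ ih => exact h.T_succ n ▸ ih.mul_left _

lemma T_succ_div_three (h : IsScale T κ) (n : ℕ) : T (n + 1) / 3 = κ (n + 1) / 3 * T n := by
  rw [h.T_succ, Nat.div_mul_right_comm (h.three_dvd_kappa_succ n)]

lemma three_pow_le_kappa_succ_div_three (h : IsScale T κ) (n : ℕ) :
    3 ^ (n + 1) ≤ κ (n + 1) / 3 :=
  (Nat.le_div_iff_mul_le (by norm_num)).2 <| by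
    simpa [pow_succ] using h.three_pow_le_kappa (n + 1)

lemma lt_T_succ_div_three (h : IsScale T κ) (n : ℕ) : n < T (n + 1) / 3 := by
  rw [h.T_succ_div_three]
  calc n < 3 ^ (n + 1) := n.lt_succ_self.trans (Nat.lt_pow_self (by norm_num))
    _ ≤ κ (n + 1) / 3 := h.three_pow_le_kappa_succ_div_three n
    _ ≤ κ (n + 1) / 3 * T n := Nat.le_mul_of_pos_right _ (h.T_pos n)

lemma T_le_T_succ_div_three (h : IsScale T κ) (n : ℕ) : T n ≤ T (n + 1) / 3 := by
  rw [h.T_succ_div_three]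
  exact Nat.le_mul_of_pos_left _ (Nat.one_le_pow _ _ (by norm_num) |>.trans
    (h.three_pow_le_kappa_succ_div_three n))

lemma three_mul_T_succ_div_three (h : IsScale T κ) (n : ℕ) : 3 * (T (n + 1) / 3) = T (n + 1) :=
  Nat.mul_div_cancel' (by rw [h.T_succ]; exact (h.three_dvd_kappa_succ n).mul_right _)

lemma block_add_le (h : IsScale T κ) (n : ℕ) : T (n + 1) / 3 + T n ≤ T (n + 1) := by
  have := h.three_mul_T_succ_div_three n
  have := h.T_le_T_succ_div_three n
  omega

lemma progBlock_eq (h : IsScale T κ) (n : ℕ) :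
    progBlock T (n + 1) = residueWindow (T (n + 1)) (T (n + 1) / 3) (T n) :=
  (residueWindow_eq (h.block_add_le n)).symm

lemma lt_of_mem_progBlock (h : IsScale T κ) {n m : ℕ} (hm : m ∈ progBlock T (n + 1)) : n < m :=
  (h.lt_T_succ_div_three n).trans_le (div_three_le_of_mem_progBlock hm)

lemma T_div_T_succ (h : IsScale T κ) (n : ℕ) : (T n : ℝ) / T (n + 1) = 1 / κ (n + 1) := by
  have := h.T_pos n
  rw [h.T_succ]
  push_cast
  field_simp

lemma hasDensity_progBlock (h : IsScale T κ) (n : ℕ) :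
    HasDensity (progBlock T (n + 1)) (1 / κ (n + 1)) := by
  rw [h.progBlock_eq, ← h.T_div_T_succ]
  exact hasDensity_residueWindow (h.block_add_le n) (h.T_pos _)

lemma countBelow_progBlock_le (h : IsScale T κ) (n N : ℕ) :
    (countBelow (progBlock T (n + 1)) N : ℝ) ≤ 4 * N / κ (n + 1) := by
  have hκ : (0 : ℝ) < κ (n + 1) := by exact_mod_cast h.kappa_pos _
  rcases le_or_gt N (T (n + 1) / 3) with hN | hN
  · rw [countBelow_eq_zero_of_forall_le fun m hm => hN.trans (div_three_le_of_mem_progBlock hm),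
      Nat.cast_zero]
    positivity
  · have hTN : (T n : ℝ) * κ (n + 1) ≤ 3 * N := by
      have := h.three_mul_T_succ_div_three n
      have := mul_comm (T n) (κ (n + 1)) ▸ h.T_succ n
      exact_mod_cast (by omega : T n * κ (n + 1) ≤ 3 * N)
    have hwin := countBelow_residueWindow_le (h.block_add_le n) (h.T_pos _) N
    rw [← h.progBlock_eq, h.T_div_T_succ] at hwin
    rw [le_div_iff₀ hκ]
    calc (countBelow (progBlock T (n + 1)) N : ℝ) * κ (n + 1)
        ≤ (1 / κ (n + 1) * N + T n) * κ (n + 1) := by gcongr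
      _ = N + T n * κ (n + 1) := by field_simp
      _ ≤ 4 * N := by linarith

lemma exists_hasDensity_blockUnion (h : IsScale T κ) (M : ℕ) :
    ∃ D, HasDensity (blockUnion T M) D := by
  refine ⟨_, hasDensity_of_periodic (periodic_mem_biUnion fun n hn => ?_) (h.T_pos M)⟩
  rw [h.progBlock_eq]
  exact periodic_residueWindow_of_dvd (h.T_dvd_of_le (Finset.mem_range.1 hn))

lemma one_div_kappa_succ_le (h : IsScale T κ) (n : ℕ) :
    (1 : ℝ) / κ (n + 1) ≤ (1 / 3) ^ n / 9 := by
  rw [one_div_pow, div_div]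
  refine one_div_le_one_div_of_le (by positivity) ?_
  exact_mod_cast (by ring : 3 ^ n * 9 = 3 ^ (n + 1 + 1)).trans_le (h.three_pow_le_kappa (n + 1))

lemma summable_one_div_kappa_succ (h : IsScale T κ) : Summable fun n => (1 : ℝ) / κ (n + 1) :=
  .of_nonneg_of_le (fun _ => by positivity) h.one_div_kappa_succ_le
    ((summable_geometric_of_lt_one (by norm_num) (by norm_num)).div_const 9)

lemma tsum_one_div_kappa_succ_le (h : IsScale T κ) : ∑' n, (1 : ℝ) / κ (n + 1) ≤ 1 / 6 := by
  refine (h.summable_one_div_kappa_succ.tsum_le_tsum h.one_div_kappa_succ_le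
    ((summable_geometric_of_lt_one (by norm_num) (by norm_num)).div_const 9)).trans_eq ?_
  rw [tsum_div_const, tsum_geometric_of_lt_one (by norm_num) (by norm_num)]
  norm_num

lemma countBelow_Rinfty_le (h : IsScale T κ) (M N : ℕ) :
    (countBelow (Rinfty T) N : ℝ) ≤
      countBelow (blockUnion T M) N + 4 * (∑' k, (1 : ℝ) / κ (k + M + 1)) * N := by
  have hcover : ∀ m < N, m ∈ Rinfty T →
      m ∈ blockUnion T M ∪ ⋃ n ∈ Finset.Ico M N, progBlock T (n + 1) := by
    intro m hm hmR
    obtain ⟨n, hn⟩ := mem_iUnion.1 hmR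
    rcases lt_or_ge n M with hnM | hMn
    · exact Or.inl (mem_iUnion₂.2 ⟨n, Finset.mem_range.2 hnM, hn⟩)
    · exact Or.inr (mem_iUnion₂.2
        ⟨n, Finset.mem_Ico.2 ⟨hMn, (h.lt_of_mem_progBlock hn).trans hm⟩, hn⟩)
  have htail :
      ∑ n ∈ Finset.Ico M N, (1 : ℝ) / κ (n + 1) ≤ ∑' k, (1 : ℝ) / κ (k + M + 1) := by
    rw [Finset.sum_Ico_eq_sum_range]
    simp_rw [add_comm M]
    exact ((summable_nat_add_iff M).2 h.summable_one_div_kappa_succ).sum_le_tsum _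
      fun _ _ => by positivity
  calc (countBelow (Rinfty T) N : ℝ)
      ≤ countBelow (blockUnion T M) N +
          ∑ n ∈ Finset.Ico M N, (countBelow (progBlock T (n + 1)) N : ℝ) := by
        exact_mod_cast (countBelow_le_of_forall_lt hcover).trans <|
          (countBelow_union_le _ _ N).trans (Nat.add_le_add_left (countBelow_biUnion_le _ _ N) _)
    _ ≤ countBelow (blockUnion T M) N + ∑ n ∈ Finset.Ico M N, (4 * N / κ (n + 1) : ℝ) := by
        gcongr with n
        exact h.countBelow_progBlock_le n N
    _ = countBelow (blockUnion T M) N +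
          4 * (∑ n ∈ Finset.Ico M N, (1 / κ (n + 1) : ℝ)) * N := by
        rw [Finset.mul_sum, Finset.sum_mul]
        exact congrArg _ (Finset.sum_congr rfl fun n _ => by ring)
    _ ≤ countBelow (blockUnion T M) N + 4 * (∑' k, (1 : ℝ) / κ (k + M + 1)) * N := by
        gcongr

end IsScale

/-- The asymptotic density of `R_∞` exists and satisfies
`1/κ 1 ≤ d(R_∞) ≤ Σ_{n ≥ 1} 1/κ n < 1`; in particular `0 < d(R_∞) < 1`. -/
theorem density_rinfty (T κ : ℕ → ℕ) (h : IsScale T κ) :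
    ∃ d : ℝ, HasDensity (Rinfty T) d ∧
      (1 : ℝ) / κ 1 ≤ d ∧ d ≤ (∑' n : ℕ, (1 : ℝ) / κ (n + 1)) ∧
      (∑' n : ℕ, (1 : ℝ) / κ (n + 1)) < 1 ∧ 0 < d ∧ d < 1 := by
  set S := ∑' n : ℕ, (1 : ℝ) / κ (n + 1)
  choose D hD using h.exists_hasDensity_blockUnion
  have hD_mono : Monotone D := fun M M' hMM' =>
    (hD M).le_of_subset (hD M') (blockUnion_mono T hMM')
  have hD_le : ∀ M, D M ≤ S := fun M =>
    ((hD M).biUnion_le_sum fun n _ => h.hasDensity_progBlock n).trans <|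
      h.summable_one_div_kappa_succ.sum_le_tsum _ fun _ _ => by positivity
  have hD_bdd : BddAbove (range D) := ⟨S, forall_mem_range.2 hD_le⟩
  have hD_one : D 1 = 1 / κ 1 := by
    have : blockUnion T 1 = progBlock T 1 := by simp [blockUnion]
    exact tendsto_nhds_unique (hD 1) (this ▸ h.hasDensity_progBlock 0)
  have hκ_one : (0 : ℝ) < 1 / κ 1 := by have := h.kappa_pos 1; positivity
  have hd_ge : 1 / κ 1 ≤ ⨆ M, D M := hD_one ▸ le_ciSup hD_bdd 1
  have hS := h.tsum_one_div_kappa_succ_le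
  have hd_le : ⨆ M, D M ≤ S := ciSup_le hD_le
  refine ⟨⨆ M, D M, ?_, hd_ge, hd_le, by linarith, by linarith, by linarith⟩
  have htail : Tendsto (fun M => 4 * ∑' k, (1 : ℝ) / κ (k + M + 1)) atTop (𝓝 0) := by
    simpa using (tendsto_sum_nat_add fun n => (1 : ℝ) / κ (n + 1)).const_mul 4
  exact .of_approx_from_below hD (tendsto_atTop_ciSup hD_mono hD_bdd) htail
    (blockUnion_subset_Rinfty T) h.countBelow_Rinfty_le
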